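/- arXiv:2505.19738 — 2 statements merged into one kernel-verified Lean document; each statement's English description precedes it below -/
import Mathlib

section
/- Let 0<α<1, l>0, T>0, integers N≥2 and M≥1, h = l/N, and a time mesh 0 = t₀ < t₁ < ⋯ < t_M ≤ T. Define the L1 weights d_{k,j} = ((t_k−t_{j−1})^{1−α} − (t_k−t_j)^{1−α})/(t_j−t_{j−1}). Let p^k ≥ 0 for all k, and let real numbers u_i^k (0≤i≤N, 0≤k≤M) satisfy: u_i^0 = φ_i for all i; u_0^k = u_N^k = 0 for all k; and for all 1≤i≤N−1, 1≤k≤M: (1/Γ(2−α)) Σ_{j=1}^{k} d_{k,j}(u_i^j − u_i^{j−1}) − (u_{i+1}^k − 2u_i^k + u_{i−1}^k)/h² + p^k u_i^k = f_i^k. Then for every 1≤k≤M: max_{0≤i≤N} |u_i^k| ≤ max_{0≤i≤N} |φ_i| + T^α Γ(1−α) · max_{1≤m≤k} max_{0≤i≤N} |f_i^m|. -/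
/-!
At the time level `k` look at the grid point where `u^k` is largest. There the discrete Laplacian
is nonpositive and `p^k u ≥ 0`, so the L1 quotient of that grid point is bounded by the source.
The L1 weights `d_{k,j}` increase in `j` (concavity of `x ↦ x ^ (1 - α)`), so summation by parts
turns this into `d_{k,k} u^k ≤ d_{k,1} φ + ∑_{j<k} (d_{k,j+1} - d_{k,j}) u^j + Γ(2-α) ‖f‖`;
together with `Γ(2-α) ≤ T^α Γ(1-α) d_{k,1}` this propagates the bound `‖φ‖ + T^α Γ(1-α) ‖f‖` by
strong induction on `k`. Applying the same to `-u` gives the bound on `|u|`.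
-/

open Finset

theorem sum_Icc_mul_sub_eq {R : Type*} [CommRing R] (w v : ℕ → R) {k : ℕ} (hk : 1 ≤ k) :
    ∑ j ∈ Icc 1 k, w j * (v j - v (j - 1)) =
      w k * v k - w 1 * v 0 - ∑ j ∈ Ico 1 k, (w (j + 1) - w j) * v j := by
  induction k, hk using Nat.le_induction with
  | base => simp [mul_sub]
  | succ k hk ih =>
    rw [sum_Icc_succ_top (by omega), ih, sum_Ico_succ_top hk, Nat.add_sub_cancel]
    ring

theorem le_of_sum_mul_sub_le {w v : ℕ → ℝ} {k : ℕ} {Φ R : ℝ} (hk : 1 ≤ k) (hw1 : 0 < w 1)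
    (hw : ∀ j, 1 ≤ j → j < k → w j ≤ w (j + 1)) (hv0 : v 0 ≤ Φ)
    (hv : ∀ j, 1 ≤ j → j < k → v j ≤ R)
    (hsum : ∑ j ∈ Icc 1 k, w j * (v j - v (j - 1)) ≤ w 1 * (R - Φ)) : v k ≤ R := by
  have htel : ∑ j ∈ Ico 1 k, (w (j + 1) - w j) = w k - w 1 := sum_Ico_sub w hk
  have hincr : ∑ j ∈ Ico 1 k, (w (j + 1) - w j) * v j ≤ (w k - w 1) * R := by
    rw [← htel, sum_mul]
    refine sum_le_sum fun j hj => ?_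
    obtain ⟨hj1, hjk⟩ := mem_Ico.1 hj
    exact mul_le_mul_of_nonneg_left (hv j hj1 hjk) (sub_nonneg.2 (hw j hj1 hjk))
  have hwk : w 1 ≤ w k := by
    rw [← sub_nonneg, ← htel]
    exact sum_nonneg fun j hj => sub_nonneg.2 (hw j (mem_Ico.1 hj).1 (mem_Ico.1 hj).2)
  rw [sum_Icc_mul_sub_eq w v hk] at hsum
  refine le_of_mul_le_mul_left ?_ (hw1.trans_le hwk)
  nlinarith [mul_le_mul_of_nonneg_left hv0 hw1.le]

section L1Weights

variable {α T : ℝ} {t : ℕ → ℝ} {k j : ℕ}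

noncomputable def l1Weight (α : ℝ) (t : ℕ → ℝ) (k j : ℕ) : ℝ :=
  ((t k - t (j - 1)) ^ (1 - α) - (t k - t j) ^ (1 - α)) / (t j - t (j - 1))

theorem l1Weight_le_l1Weight_succ (hα0 : 0 ≤ α) (hα1 : α ≤ 1) (ht : StrictMonoOn t (Set.Iic k))
    (hj : 1 ≤ j) (hjk : j < k) : l1Weight α t k j ≤ l1Weight α t k (j + 1) := by
  have hmem : ∀ {i}, i ≤ k → i ∈ Set.Iic k := Set.mem_Iic.2
  have h₁ : t (j - 1) < t j := ht (hmem (by omega)) (hmem hjk.le) (by omega)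
  have h₂ : t j < t (j + 1) := ht (hmem hjk.le) (hmem hjk) (by omega)
  have h₃ : t (j + 1) ≤ t k := ht.monotoneOn (hmem hjk) (hmem le_rfl) hjk
  have hslope := (Real.concaveOn_rpow (sub_nonneg.2 hα1) (by linarith)).slope_anti_adjacent
    (Set.mem_Ici.2 (sub_nonneg.2 h₃)) (Set.mem_Ici.2 (by linarith : 0 ≤ t k - t (j - 1)))
    (by linarith : t k - t (j + 1) < t k - t j) (by linarith : t k - t j < t k - t (j - 1))
  simp only [l1Weight, Nat.add_sub_cancel]
  rwa [sub_sub_sub_cancel_left, sub_sub_sub_cancel_left] at hslope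

theorem one_sub_div_rpow_le_l1Weight_one (hα0 : 0 ≤ α) (hα1 : α ≤ 1) (ht0 : t 0 = 0)
    (ht1 : 0 < t 1) (hk : t 1 ≤ t k) : (1 - α) / t k ^ α ≤ l1Weight α t k 1 := by
  have htk : 0 < t k := ht1.trans_le hk
  have hamgm : (t k - t 1) ^ (1 - α) * t k ^ α ≤ (1 - α) * (t k - t 1) + α * t k :=
    Real.geom_mean_le_arith_mean2_weighted (sub_nonneg.2 hα1) hα0 (sub_nonneg.2 hk) htk.le
      (by ring)
  have hsplit : t k ^ (1 - α) * t k ^ α = t k := by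
    rw [← Real.rpow_add htk, sub_add_cancel, Real.rpow_one]
  rw [l1Weight, Nat.sub_self, ht0, sub_zero, sub_zero,
    div_le_div_iff₀ (Real.rpow_pos_of_pos htk α) ht1]
  linarith

theorem one_le_mul_l1Weight_one (hα0 : 0 < α) (hα1 : α < 1) (ht : StrictMonoOn t (Set.Iic k))
    (ht0 : t 0 = 0) (hk : 1 ≤ k) (hkT : t k ≤ T) :
    1 ≤ T ^ α * Real.Gamma (1 - α) * (1 / Real.Gamma (2 - α) * l1Weight α t k 1) := by
  have hmem : ∀ {i}, i ≤ k → i ∈ Set.Iic k := Set.mem_Iic.2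
  have ht1 : 0 < t 1 := ht0 ▸ ht (hmem (Nat.zero_le k)) (hmem hk) Nat.one_pos
  have ht1k : t 1 ≤ t k := ht.monotoneOn (hmem hk) (hmem le_rfl) hk
  have htk : 0 < t k := ht1.trans_le ht1k
  have hΓ : Real.Gamma (2 - α) = (1 - α) * Real.Gamma (1 - α) := by
    rw [show 2 - α = (1 - α) + 1 by ring, Real.Gamma_add_one (by linarith)]
  have hΓpos : 0 < Real.Gamma (1 - α) := Real.Gamma_pos_of_pos (by linarith)
  have hTα : t k ^ α ≤ T ^ α := Real.rpow_le_rpow htk.le hkT hα0.le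
  have hweight := one_sub_div_rpow_le_l1Weight_one hα0.le hα1.le ht0 ht1 ht1k
  have hW : 0 ≤ l1Weight α t k 1 :=
    (div_nonneg (by linarith) (Real.rpow_nonneg htk.le α)).trans hweight
  rw [div_le_iff₀ (Real.rpow_pos_of_pos htk α)] at hweight
  rw [hΓ, show T ^ α * Real.Gamma (1 - α) * (1 / ((1 - α) * Real.Gamma (1 - α)) *
      l1Weight α t k 1) = T ^ α * l1Weight α t k 1 / (1 - α) by field_simp,
    one_le_div (by linarith)]
  nlinarith [mul_le_mul_of_nonneg_left hTα hW]

end L1Weights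

/-- The fully implicit scheme up to time level `K`, with homogeneous Dirichlet data; for the L1
scheme the memory weights are `c k j = d k j / Γ(2 - α)`. -/
structure SolvesScheme (N K : ℕ) (c : ℕ → ℕ → ℝ) (p : ℕ → ℝ) (h : ℝ) (u f : ℕ → ℕ → ℝ) :
    Prop where
  boundary : ∀ k ≤ K, u 0 k = 0 ∧ u N k = 0
  interior : ∀ i, 1 ≤ i → i ≤ N - 1 → ∀ k, 1 ≤ k → k ≤ K →
    ∑ j ∈ Icc 1 k, c k j * (u i j - u i (j - 1))
      - (u (i + 1) k - 2 * u i k + u (i - 1) k) / h ^ 2 + p k * u i k = f i k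

namespace SolvesScheme

variable {N K : ℕ} {c : ℕ → ℕ → ℝ} {p : ℕ → ℝ} {h : ℝ} {u f : ℕ → ℕ → ℝ} {Φ B C : ℝ}

theorem neg (hu : SolvesScheme N K c p h u f) : SolvesScheme N K c p h (-u) (-f) where
  boundary k hk := by simp [(hu.boundary k hk).1, (hu.boundary k hk).2]
  interior i hi1 hiN k hk1 hkK := by
    have hsum : ∑ j ∈ Icc 1 k, c k j * ((-u) i j - (-u) i (j - 1)) =
        -∑ j ∈ Icc 1 k, c k j * (u i j - u i (j - 1)) := by
      rw [← sum_neg_distrib]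
      exact sum_congr rfl fun j _ => by simp only [Pi.neg_apply]; ring
    rw [hsum]
    simp only [Pi.neg_apply, ← hu.interior i hi1 hiN k hk1 hkK]
    ring

theorem le_add_mul (hu : SolvesScheme N K c p h u f) (hC : 0 ≤ C)
    (hc1 : ∀ k, 1 ≤ k → k ≤ K → 1 ≤ C * c k 1)
    (hc : ∀ k j, 1 ≤ j → j < k → k ≤ K → c k j ≤ c k (j + 1))
    (hp : ∀ k, 1 ≤ k → k ≤ K → 0 ≤ p k) (hΦ : 0 ≤ Φ) (hu0 : ∀ i ≤ N, u i 0 ≤ Φ) (hB : 0 ≤ B)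
    (hf : ∀ i, 1 ≤ i → i ≤ N - 1 → ∀ k, 1 ≤ k → k ≤ K → f i k ≤ B) :
    ∀ k ≤ K, ∀ i ≤ N, u i k ≤ Φ + C * B := by
  have hR : Φ ≤ Φ + C * B := le_add_of_nonneg_right (mul_nonneg hC hB)
  intro k
  induction k using Nat.strong_induction_on with
  | _ k ih =>
  intro hkK i hi
  rcases Nat.eq_zero_or_pos k with rfl | hk
  · exact (hu0 i hi).trans hR
  have hgrid : ∀ {i}, i ≤ N → i ∈ range (N + 1) := fun hi => mem_range.2 (Nat.lt_succ_of_le hi)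
  obtain ⟨i₀, hi₀N, hmax⟩ := (range (N + 1)).exists_max_image (u · k) ⟨0, hgrid (Nat.zero_le N)⟩
  replace hi₀N : i₀ ≤ N := Nat.lt_succ_iff.1 (mem_range.1 hi₀N)
  refine (hmax i (hgrid hi)).trans ?_
  rcases le_or_gt (u i₀ k) 0 with hneg | hpos
  · exact hneg.trans (hΦ.trans hR)
  obtain ⟨hi₀1, hi₀N'⟩ : 1 ≤ i₀ ∧ i₀ ≤ N - 1 := by
    obtain ⟨h0, hN⟩ := hu.boundary k hkK
    have : i₀ ≠ 0 := by rintro rfl; linarith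
    have : i₀ ≠ N := by rintro rfl; linarith
    omega
  have hlap : u (i₀ + 1) k - 2 * u i₀ k + u (i₀ - 1) k ≤ 0 := by
    linarith [hmax (i₀ + 1) (hgrid (by omega)), hmax (i₀ - 1) (hgrid (by omega))]
  have hsum : ∑ j ∈ Icc 1 k, c k j * (u i₀ j - u i₀ (j - 1)) ≤ B := by
    have := hu.interior i₀ hi₀1 hi₀N' k hk hkK
    have := div_nonpos_of_nonpos_of_nonneg hlap (sq_nonneg h)
    have := mul_nonneg (hp k hk hkK) hpos.le
    linarith [hf i₀ hi₀1 hi₀N' k hk hkK]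
  have hc1k := hc1 k hk hkK
  refine le_of_sum_mul_sub_le hk (pos_of_mul_pos_right (by linarith) hC)
    (fun j hj hjk => hc k j hj hjk hkK) (hu0 i₀ hi₀N)
    (fun j _ hjk => ih j hjk (by omega) i₀ hi₀N) ?_
  calc _ ≤ B := hsum
    _ ≤ C * c k 1 * B := le_mul_of_one_le_left hB hc1k
    _ = c k 1 * (Φ + C * B - Φ) := by ring

theorem abs_le_add_mul (hu : SolvesScheme N K c p h u f) (hC : 0 ≤ C)
    (hc1 : ∀ k, 1 ≤ k → k ≤ K → 1 ≤ C * c k 1)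
    (hc : ∀ k j, 1 ≤ j → j < k → k ≤ K → c k j ≤ c k (j + 1))
    (hp : ∀ k, 1 ≤ k → k ≤ K → 0 ≤ p k) (hu0 : ∀ i ≤ N, |u i 0| ≤ Φ) (hB : 0 ≤ B)
    (hf : ∀ i, 1 ≤ i → i ≤ N - 1 → ∀ k, 1 ≤ k → k ≤ K → |f i k| ≤ B) :
    ∀ k ≤ K, ∀ i ≤ N, |u i k| ≤ Φ + C * B := by
  have hΦ : 0 ≤ Φ := (abs_nonneg _).trans (hu0 0 (Nat.zero_le N))
  intro k hk i hi
  refine abs_le.2 ⟨?_, hu.le_add_mul hC hc1 hc hp hΦ (fun i hi => (le_abs_self _).trans (hu0 i hi))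
    hB (fun i hi1 hiN k hk1 hkK => (le_abs_self _).trans (hf i hi1 hiN k hk1 hkK)) k hk i hi⟩
  have := hu.neg.le_add_mul hC hc1 hc hp hΦ (fun i hi => (neg_le_abs _).trans (hu0 i hi))
    hB (fun i hi1 hiN k hk1 hkK => (neg_le_abs _).trans (hf i hi1 hiN k hk1 hkK)) k hk i hi
  rw [Pi.neg_apply, Pi.neg_apply] at this
  linarith

end SolvesScheme

theorem le_ciSup_fin (g : ℕ → ℝ) {n i : ℕ} (hi : i < n) : g i ≤ ⨆ j : Fin n, g j :=
  le_ciSup (f := fun j : Fin n => g j) (Set.finite_range _).bddAbove ⟨i, hi⟩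

theorem le_ciSup_fin_ciSup_fin (g : ℕ → ℕ → ℝ) {n k i m : ℕ} (hi : i < n) (hm : 1 ≤ m)
    (hmk : m ≤ k) : g i m ≤ ⨆ m' : Fin k, ⨆ i' : Fin n, g i' (m' + 1) := by
  obtain ⟨m, rfl⟩ := Nat.exists_eq_add_of_le' hm
  exact (le_ciSup_fin (g · (m + 1)) hi).trans
    (le_ciSup_fin (fun m' => ⨆ i' : Fin n, g i' (m' + 1)) (by omega))

theorem L1_scheme_stability_general (α T : ℝ) (hα0 : 0 < α) (hα1 : α < 1)
    (hT : 0 < T) (N M : ℕ)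
    (h : ℝ)
    (t : ℕ → ℝ) (ht0 : t 0 = 0) (htmono : ∀ k, k < M → t k < t (k + 1))
    (htT : t M ≤ T)
    (d : ℕ → ℕ → ℝ)
    (hd : ∀ k j : ℕ, 1 ≤ j → j ≤ k → k ≤ M →
      d k j = ((t k - t (j - 1)) ^ (1 - α) - (t k - t j) ^ (1 - α)) /
        (t j - t (j - 1)))
    (p : ℕ → ℝ) (hp : ∀ k ≤ M, 0 ≤ p k)
    (φ : ℕ → ℝ) (f : ℕ → ℕ → ℝ) (u : ℕ → ℕ → ℝ)
    (hIC : ∀ i ≤ N, u i 0 = φ i)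
    (hBC : ∀ k ≤ M, u 0 k = 0 ∧ u N k = 0)
    (hscheme : ∀ i, 1 ≤ i → i ≤ N - 1 → ∀ k, 1 ≤ k → k ≤ M →
      (1 / Real.Gamma (2 - α)) *
          (∑ j ∈ Finset.Icc 1 k, d k j * (u i j - u i (j - 1)))
        - (u (i + 1) k - 2 * u i k + u (i - 1) k) / h ^ 2
        + p k * u i k = f i k) :
    ∀ k, 1 ≤ k → k ≤ M → ∀ i ≤ N,
      |u i k| ≤ (⨆ i' : Fin (N + 1), |φ (i' : ℕ)|) +
        T ^ α * Real.Gamma (1 - α) *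
          ⨆ m : Fin k, ⨆ i' : Fin (N + 1), |f (i' : ℕ) ((m : ℕ) + 1)| := by
  intro k hk hkM
  have htM : StrictMonoOn t (Set.Iic M) := strictMonoOn_Iic_of_lt_succ htmono
  have ht : ∀ {k'}, k' ≤ k → StrictMonoOn t (Set.Iic k') := fun hk' =>
    htM.mono (Set.Iic_subset_Iic.2 (hk'.trans hkM))
  have hd' : ∀ k' j, 1 ≤ j → j ≤ k' → k' ≤ k → d k' j = l1Weight α t k' j :=
    fun k' j hj hjk hk' => hd k' j hj hjk (hk'.trans hkM)
  have hsol : SolvesScheme N k (fun k j => 1 / Real.Gamma (2 - α) * d k j) p h u f :=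
    { boundary := fun k' hk' => hBC k' (hk'.trans hkM)
      interior := fun i hi1 hiN k' hk'1 hk' => by
        simp only [mul_assoc, ← mul_sum, hscheme i hi1 hiN k' hk'1 (hk'.trans hkM)] }
  have hC : 0 ≤ T ^ α * Real.Gamma (1 - α) :=
    mul_nonneg (Real.rpow_nonneg hT.le α) (Real.Gamma_pos_of_pos (by linarith)).le
  refine hsol.abs_le_add_mul hC (fun k' hk'1 hk' => ?_) (fun k' j hj hjk hk' => ?_)
    (fun k' _ hk' => hp k' (hk'.trans hkM))
    (fun i hi => (hIC i hi).symm ▸ le_ciSup_fin (|φ ·|) (Nat.lt_succ_of_le hi))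
    ((abs_nonneg _).trans (le_ciSup_fin_ciSup_fin (|f · ·|) (Nat.zero_lt_succ N) le_rfl hk))
    (fun i _ hiN m hm hmk => le_ciSup_fin_ciSup_fin (|f · ·|) (by omega) hm hmk) k le_rfl
  · have htT' : t k' ≤ T :=
      (htM.monotoneOn (Set.mem_Iic.2 (hk'.trans hkM)) (Set.mem_Iic.2 le_rfl) (hk'.trans hkM)).trans
        htT
    rw [hd' k' 1 le_rfl hk'1 hk']
    exact one_le_mul_l1Weight_one hα0 hα1 (ht hk') ht0 hk'1 htT'
  · rw [hd' k' j hj hjk.le hk', hd' k' (j + 1) (by omega) hjk hk']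
    exact mul_le_mul_of_nonneg_left (l1Weight_le_l1Weight_succ hα0.le hα1.le (ht hk') hj hjk)
      (one_div_pos.2 (Real.Gamma_pos_of_pos (by linarith))).le

/-- Unconditional maximum-norm stability of the fully implicit L1
finite-difference scheme for `∂_t^α u − u_xx + p(t)u = f` with homogeneous
Dirichlet boundary conditions on a (possibly graded) time mesh:
`‖u^k‖_∞ ≤ ‖φ‖_∞ + T^α Γ(1−α) max_{1≤m≤k} ‖f^m‖_∞`. -/
theorem L1_scheme_stability (α l T : ℝ) (hα0 : 0 < α) (hα1 : α < 1)
    (hl : 0 < l) (hT : 0 < T) (N M : ℕ) (hN : 2 ≤ N) (hM : 1 ≤ M)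
    (h : ℝ) (hh : h = l / N)
    (t : ℕ → ℝ) (ht0 : t 0 = 0) (htmono : ∀ k, k < M → t k < t (k + 1))
    (htT : t M ≤ T)
    (d : ℕ → ℕ → ℝ)
    (hd : ∀ k j : ℕ, 1 ≤ j → j ≤ k → k ≤ M →
      d k j = ((t k - t (j - 1)) ^ (1 - α) - (t k - t j) ^ (1 - α)) /
        (t j - t (j - 1)))
    (p : ℕ → ℝ) (hp : ∀ k ≤ M, 0 ≤ p k)
    (φ : ℕ → ℝ) (f : ℕ → ℕ → ℝ) (u : ℕ → ℕ → ℝ)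
    (hIC : ∀ i ≤ N, u i 0 = φ i)
    (hBC : ∀ k ≤ M, u 0 k = 0 ∧ u N k = 0)
    (hscheme : ∀ i, 1 ≤ i → i ≤ N - 1 → ∀ k, 1 ≤ k → k ≤ M →
      (1 / Real.Gamma (2 - α)) *
          (∑ j ∈ Finset.Icc 1 k, d k j * (u i j - u i (j - 1)))
        - (u (i + 1) k - 2 * u i k + u (i - 1) k) / h ^ 2
        + p k * u i k = f i k) :
    ∀ k, 1 ≤ k → k ≤ M → ∀ i ≤ N,
      |u i k| ≤ (⨆ i' : Fin (N + 1), |φ (i' : ℕ)|) +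
        T ^ α * Real.Gamma (1 - α) *
          ⨆ m : Fin k, ⨆ i' : Fin (N + 1), |f (i' : ℕ) ((m : ℕ) + 1)| :=
  L1_scheme_stability_general α T hα0 hα1 hT N M h t ht0 htmono htT d hd p hp φ f u hIC hBC hscheme
end

section
/- Let 0<α<1, l>0, T>0. Let p:[0,T]→ℝ and f:[0,l]×[0,T]→ℝ be continuous, ω:[0,l]→ℝ twice continuously differentiable, and u:[0,l]×[0,T]→ℝ continuous with ∂u/∂t continuous on [0,l]×[0,T] and u(·,t) twice continuously differentiable on [0,l] for each t. Suppose u satisfies ∂_t^α u − u_xx + p(t)u = f on (0,l)×(0,T], u(0,t)=u(l,t)=0 for all t, and ∫₀^l u(x,t)ω(x) dx = g(t) for all t, where g(t) ≠ 0. Then for every t∈(0,T]: p(t) = [ u_x(l,t)ω(l) − u_x(0,t)ω(0) + ∫₀^l u(x,t)ω″(x) dx + ∫₀^l f(x,t)ω(x) dx − ∂_t^α g(t) ] / g(t). -/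
/-!
Apply `∂_t^α` to `g(t) = ∫₀ˡ u(x,t) ω(x) dx`. Differentiating under the integral sign and then
swapping the two integrals (legitimate because the kernel `(t - s)^(-α)` is integrable for
`α < 1` and `u_t ω` is bounded on the compact rectangle) gives
`∂_t^α g(t) = ∫₀ˡ ∂_t^α u(x,t) ω(x) dx`. Substituting the equation turns this into
`∫₀ˡ (f + u_xx) ω dx - p(t) g(t)`, and two integrations by parts move the second derivative
onto `ω`; the boundary terms `u ω'` vanish by the Dirichlet conditions. Dividing by `g(t) ≠ 0`
gives `p(t)`.
-/

open MeasureTheory Set Function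

theorem intervalIntegrable_sub_rpow {r : ℝ} (hr : -1 < r) (t a b : ℝ) :
    IntervalIntegrable (fun s => (t - s) ^ r) volume a b := by
  simpa using
    (intervalIntegral.intervalIntegrable_rpow' hr (a := t - a) (b := t - b)).comp_sub_left t

theorem integral_deriv_deriv_mul_eq {a b : ℝ} {v v' v'' w w' w'' : ℝ → ℝ}
    (hv : ∀ x ∈ uIcc a b, HasDerivAt v (v' x) x) (hv' : ∀ x ∈ uIcc a b, HasDerivAt v' (v'' x) x)
    (hw : ∀ x ∈ uIcc a b, HasDerivAt w (w' x) x) (hw' : ∀ x ∈ uIcc a b, HasDerivAt w' (w'' x) x)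
    (hv'' : IntervalIntegrable v'' volume a b) (hw'' : IntervalIntegrable w'' volume a b) :
    ∫ x in a..b, v'' x * w x
      = v' b * w b - v' a * w a - (v b * w' b - v a * w' a) + ∫ x in a..b, v x * w'' x := by
  have hv'_int : IntervalIntegrable v' volume a b :=
    ContinuousOn.intervalIntegrable fun x hx => (hv' x hx).continuousAt.continuousWithinAt
  have hw'_int : IntervalIntegrable w' volume a b :=
    ContinuousOn.intervalIntegrable fun x hx => (hw' x hx).continuousAt.continuousWithinAt
  have h₁ := intervalIntegral.integral_mul_deriv_eq_deriv_mul hw hv' hw'_int hv''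
  have h₂ := intervalIntegral.integral_mul_deriv_eq_deriv_mul hv hw' hv'_int hw''
  simp only [mul_comm (w _), mul_comm (w' _)] at h₁
  rw [h₁, h₂]
  ring

theorem intervalIntegral_mul_intervalIntegral_swap {k : ℝ → ℝ} {h : ℝ → ℝ → ℝ} {a b c d : ℝ}
    (hk : IntervalIntegrable k volume a b)
    (hh : ContinuousOn (uncurry h) (uIcc a b ×ˢ uIcc c d)) :
    ∫ s in a..b, k s * ∫ x in c..d, h s x = ∫ x in c..d, ∫ s in a..b, k s * h s x := by
  obtain ⟨C, hC⟩ := (isCompact_uIcc.prod isCompact_uIcc).exists_bound_of_continuousOn hh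
  simp_rw [← intervalIntegral.integral_const_mul]
  apply intervalIntegral_intervalIntegral_swap
  have hkC : IntegrableOn (fun q : ℝ × ℝ => k q.1 * C) (uIoc a b ×ˢ uIoc c d) := by
    rw [IntegrableOn, Measure.volume_eq_prod, ← Measure.prod_restrict]
    exact hk.def'.mul_prod (integrableOn_const measure_Ioc_lt_top.ne)
  refine Integrable.mono hkC ?_ ?_
  · have hh_meas := (hh.mono (prod_mono uIoc_subset_uIcc uIoc_subset_uIcc)).aestronglyMeasurable
      (μ := volume) (measurableSet_uIoc.prod measurableSet_uIoc)
    rw [Measure.volume_eq_prod, ← Measure.prod_restrict] at hh_meas ⊢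
    exact hk.def'.aestronglyMeasurable.comp_fst.mul hh_meas
  · filter_upwards [ae_restrict_mem (measurableSet_uIoc.prod measurableSet_uIoc)] with q hq
    rw [uncurry_apply_pair, norm_mul, norm_mul]
    gcongr
    exact (hC q (prod_mono uIoc_subset_uIcc uIoc_subset_uIcc hq)).trans (le_abs_self C)

theorem hasDerivAt_intervalIntegral_of_continuousOn {F F' : ℝ → ℝ → ℝ} {a b c d s : ℝ}
    (hF : ContinuousOn (uncurry F) (Icc c d ×ˢ uIcc a b))
    (hF' : ContinuousOn (uncurry F') (Icc c d ×ˢ uIcc a b))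
    (hderiv : ∀ τ ∈ Ioo c d, ∀ x ∈ uIcc a b, HasDerivAt (fun τ => F τ x) (F' τ x) τ)
    (hs : s ∈ Ioo c d) :
    HasDerivAt (fun τ => ∫ x in a..b, F τ x) (∫ x in a..b, F' s x) s := by
  obtain ⟨C, hC⟩ := (isCompact_Icc.prod isCompact_uIcc).exists_bound_of_continuousOn hF'
  have hslice : ∀ {G : ℝ → ℝ → ℝ}, ContinuousOn (uncurry G) (Icc c d ×ˢ uIcc a b) →
      ∀ τ ∈ Icc c d, IntervalIntegrable (G τ) volume a b :=
    fun hG τ hτ => (hG.uncurry_left τ hτ).intervalIntegrable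
  refine (intervalIntegral.hasDerivAt_integral_of_dominated_loc_of_deriv_le (bound := fun _ => C)
    (isOpen_Ioo.mem_nhds hs) ?_ (hslice hF s (Ioo_subset_Icc_self hs))
    (hslice hF' s (Ioo_subset_Icc_self hs)).def'.aestronglyMeasurable ?_ intervalIntegrable_const
    ?_).2
  · filter_upwards [isOpen_Ioo.mem_nhds hs] with τ hτ
    exact (hslice hF τ (Ioo_subset_Icc_self hτ)).def'.aestronglyMeasurable
  · exact .of_forall fun x hx τ hτ =>
      hC (τ, x) ⟨Ioo_subset_Icc_self hτ, uIoc_subset_uIcc hx⟩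
  · exact .of_forall fun x hx τ hτ => hderiv τ hτ x (uIoc_subset_uIcc hx)

noncomputable def caputoDeriv (α : ℝ) (v : ℝ → ℝ) (t : ℝ) : ℝ :=
  1 / Real.Gamma (1 - α) * ∫ s in (0:ℝ)..t, (t - s) ^ (-α) * deriv v s

theorem caputoDeriv_congr {α t : ℝ} {v w : ℝ → ℝ} (ht : 0 ≤ t) (h : EqOn v w (Icc 0 t)) :
    caputoDeriv α v t = caputoDeriv α w t := by
  unfold caputoDeriv
  congr 1
  refine intervalIntegral.integral_congr_Ioo_of_le ht fun s hs => ?_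
  rw [(h.eventuallyEq_of_mem (Icc_mem_nhds hs.1 hs.2)).deriv_eq]

theorem caputoDeriv_eq_of_hasDerivAt {α t : ℝ} {v v' : ℝ → ℝ} (ht : 0 ≤ t)
    (h : ∀ s ∈ Ioo 0 t, HasDerivAt v (v' s) s) :
    caputoDeriv α v t = 1 / Real.Gamma (1 - α) * ∫ s in (0:ℝ)..t, (t - s) ^ (-α) * v' s := by
  unfold caputoDeriv
  congr 1
  exact intervalIntegral.integral_congr_Ioo_of_le ht fun s hs => by rw [(h s hs).deriv]

theorem caputoDeriv_mul_const (α : ℝ) (v : ℝ → ℝ) (c t : ℝ) :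
    caputoDeriv α (fun s => v s * c) t = caputoDeriv α v t * c := by
  simp only [caputoDeriv, deriv_mul_const_field, ← mul_assoc, intervalIntegral.integral_mul_const]

theorem caputoDeriv_intervalIntegral {α a b t : ℝ} {F F' : ℝ → ℝ → ℝ} (hα : α < 1) (ht : 0 ≤ t)
    (hF : ContinuousOn (uncurry F) (Icc 0 t ×ˢ uIcc a b))
    (hF' : ContinuousOn (uncurry F') (Icc 0 t ×ˢ uIcc a b))
    (hderiv : ∀ s ∈ Ioo 0 t, ∀ x ∈ uIcc a b, HasDerivAt (fun s => F s x) (F' s x) s) :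
    caputoDeriv α (fun s => ∫ x in a..b, F s x) t
      = ∫ x in a..b, caputoDeriv α (fun s => F s x) t := by
  have hinner : ∀ x ∈ uIcc a b, caputoDeriv α (fun s => F s x) t
      = 1 / Real.Gamma (1 - α) * ∫ s in (0:ℝ)..t, (t - s) ^ (-α) * F' s x :=
    fun x hx => caputoDeriv_eq_of_hasDerivAt ht fun s hs => hderiv s hs x hx
  rw [intervalIntegral.integral_congr hinner, intervalIntegral.integral_const_mul,
    caputoDeriv_eq_of_hasDerivAt ht fun s hs => hasDerivAt_intervalIntegral_of_continuousOn hF hF'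
      hderiv hs,
    intervalIntegral_mul_intervalIntegral_swap (intervalIntegrable_sub_rpow (by linarith) t 0 t)
      (by rwa [uIcc_of_le ht])]

theorem caputoDeriv_intervalIntegral_mul {α a b t : ℝ} {u ut : ℝ → ℝ → ℝ} {ω : ℝ → ℝ}
    (hα : α < 1) (ht : 0 ≤ t)
    (hu : ContinuousOn (uncurry u) (uIcc a b ×ˢ Icc 0 t))
    (hut : ContinuousOn (uncurry ut) (uIcc a b ×ˢ Icc 0 t))
    (hω : ContinuousOn ω (uIcc a b))
    (hderiv : ∀ x ∈ uIcc a b, ∀ s ∈ Ioo 0 t, HasDerivAt (u x) (ut x s) s) :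
    caputoDeriv α (fun s => ∫ x in a..b, u x s * ω x) t
      = ∫ x in a..b, caputoDeriv α (u x) t * ω x := by
  have hweighted : ∀ {G : ℝ → ℝ → ℝ}, ContinuousOn (uncurry G) (uIcc a b ×ˢ Icc 0 t) →
      ContinuousOn (uncurry fun s x => G x s * ω x) (Icc 0 t ×ˢ uIcc a b) := fun hG =>
    (hG.comp continuous_swap.continuousOn fun _ hq => ⟨hq.2, hq.1⟩).mul
      (hω.comp continuous_snd.continuousOn fun _ hq => hq.2)
  rw [caputoDeriv_intervalIntegral hα ht (hweighted hu) (hweighted hut)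
    fun s hs x hx => (hderiv x hx s hs).mul_const (ω x)]
  simp only [caputoDeriv_mul_const]

theorem coefficient_recovery_formula_general (α l T : ℝ) (hα1 : α < 1)
    (hl : 0 < l)
    (p : ℝ → ℝ) (f : ℝ → ℝ → ℝ) (ω ω' ω'' : ℝ → ℝ) (g : ℝ → ℝ)
    (u ut ux uxx : ℝ → ℝ → ℝ)
    (hf_cont : ContinuousOn (fun q : ℝ × ℝ => f q.1 q.2)
      (Set.Icc 0 l ×ˢ Set.Icc 0 T))
    (hω' : ∀ x ∈ Set.Icc (0:ℝ) l, HasDerivAt ω (ω' x) x)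
    (hω'' : ∀ x ∈ Set.Icc (0:ℝ) l, HasDerivAt ω' (ω'' x) x)
    (hω''_cont : ContinuousOn ω'' (Set.Icc 0 l))
    (hu_cont : ContinuousOn (fun q : ℝ × ℝ => u q.1 q.2)
      (Set.Icc 0 l ×ˢ Set.Icc 0 T))
    (hut_cont : ContinuousOn (fun q : ℝ × ℝ => ut q.1 q.2)
      (Set.Icc 0 l ×ˢ Set.Icc 0 T))
    (hut : ∀ x ∈ Set.Icc (0:ℝ) l, ∀ s ∈ Set.Icc (0:ℝ) T,
      HasDerivAt (fun τ => u x τ) (ut x s) s)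
    (hux : ∀ t ∈ Set.Icc (0:ℝ) T, ∀ x ∈ Set.Icc (0:ℝ) l,
      HasDerivAt (fun y => u y t) (ux x t) x)
    (huxx : ∀ t ∈ Set.Icc (0:ℝ) T, ∀ x ∈ Set.Icc (0:ℝ) l,
      HasDerivAt (fun y => ux y t) (uxx x t) x)
    (huxx_cont : ∀ t ∈ Set.Icc (0:ℝ) T,
      ContinuousOn (fun x => uxx x t) (Set.Icc 0 l))
    (hPDE : ∀ x ∈ Set.Ioo (0:ℝ) l, ∀ t ∈ Set.Ioc (0:ℝ) T,
      (1 / Real.Gamma (1 - α)) * (∫ s in (0:ℝ)..t, (t - s) ^ (-α) * ut x s)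
        - uxx x t + p t * u x t = f x t)
    (hBC : ∀ t ∈ Set.Icc (0:ℝ) T, u 0 t = 0 ∧ u l t = 0)
    (hover : ∀ t ∈ Set.Icc (0:ℝ) T, (∫ x in (0:ℝ)..l, u x t * ω x) = g t)
    (hg_ne : ∀ t ∈ Set.Icc (0:ℝ) T, g t ≠ 0) :
    ∀ t ∈ Set.Ioc (0:ℝ) T,
      p t = (ux l t * ω l - ux 0 t * ω 0
          + (∫ x in (0:ℝ)..l, u x t * ω'' x)
          + (∫ x in (0:ℝ)..l, f x t * ω x)
          - (1 / Real.Gamma (1 - α)) *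
              ∫ s in (0:ℝ)..t, (t - s) ^ (-α) * deriv g s) / g t := by
  rintro t ⟨ht0, htT⟩
  have htT' : t ∈ Icc 0 T := ⟨ht0.le, htT⟩
  have hIcc : uIcc 0 l = Icc 0 l := uIcc_of_le hl.le
  have hω_cont : ContinuousOn ω (Icc 0 l) := fun x hx => (hω' x hx).continuousAt.continuousWithinAt
  have hrect : uIcc 0 l ×ˢ Icc 0 t ⊆ Icc 0 l ×ˢ Icc 0 T :=
    prod_mono hIcc.subset (Icc_subset_Icc_right htT)
  have hmoment : caputoDeriv α g t = ∫ x in (0:ℝ)..l, caputoDeriv α (u x) t * ω x := by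
    rw [caputoDeriv_congr ht0.le fun s hs => (hover s ⟨hs.1, hs.2.trans htT⟩).symm,
      caputoDeriv_intervalIntegral_mul hα1 ht0.le (hu_cont.mono hrect) (hut_cont.mono hrect)
        (hIcc ▸ hω_cont) fun x hx s hs => hut x (hIcc ▸ hx) s ⟨hs.1.le, hs.2.le.trans htT⟩]
  have hcaputo_u : ∀ x ∈ Ioo 0 l, caputoDeriv α (u x) t = f x t + uxx x t - p t * u x t :=
    fun x hx => by
      rw [caputoDeriv_eq_of_hasDerivAt ht0.le
        fun s hs => hut x (Ioo_subset_Icc_self hx) s ⟨hs.1.le, hs.2.le.trans htT⟩]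
      linarith [hPDE x hx t ⟨ht0, htT⟩]
  have hintegrable : ∀ {φ : ℝ → ℝ}, ContinuousOn φ (Icc 0 l) →
      IntervalIntegrable (fun x => φ x * ω x) volume 0 l := fun hφ =>
    (hφ.mul hω_cont).intervalIntegrable_of_Icc hl.le
  have hf_int := hintegrable (hf_cont.uncurry_right t htT')
  have huxx_int := hintegrable (huxx_cont t htT')
  have hsplit : caputoDeriv α g t
      = (∫ x in (0:ℝ)..l, f x t * ω x) + (∫ x in (0:ℝ)..l, uxx x t * ω x) - p t * g t := by
    rw [hmoment, ← hover t htT', ← intervalIntegral.integral_const_mul,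
      ← intervalIntegral.integral_add hf_int huxx_int,
      ← intervalIntegral.integral_sub (hf_int.add huxx_int)
        ((hintegrable (hu_cont.uncurry_right t htT')).const_mul _)]
    exact intervalIntegral.integral_congr_Ioo_of_le hl.le fun x hx => by
      simp only [hcaputo_u x hx]; ring
  have hgreen := integral_deriv_deriv_mul_eq (hIcc ▸ hux t htT') (hIcc ▸ huxx t htT')
    (hIcc ▸ hω') (hIcc ▸ hω'') ((huxx_cont t htT').intervalIntegrable_of_Icc hl.le)
    (hω''_cont.intervalIntegrable_of_Icc hl.le)
  rw [(hBC t htT').1, (hBC t htT').2] at hgreen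
  rw [eq_div_iff (hg_ne t htT')]
  unfold caputoDeriv at hsplit
  linarith

/-- Recovery formula for the unknown coefficient `p(t)` from the integral
overdetermination condition `∫₀ˡ u(x,t) ω(x) dx = g(t)`:
`p(t) = [u_x(l,t)ω(l) − u_x(0,t)ω(0) + ∫₀ˡ u ω″ dx + ∫₀ˡ f ω dx − ∂_t^α g(t)] / g(t)`. -/
theorem coefficient_recovery_formula (α l T : ℝ) (hα0 : 0 < α) (hα1 : α < 1)
    (hl : 0 < l) (hT : 0 < T)
    (p : ℝ → ℝ) (f : ℝ → ℝ → ℝ) (ω ω' ω'' : ℝ → ℝ) (g : ℝ → ℝ)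
    (u ut ux uxx : ℝ → ℝ → ℝ)
    (hp_cont : ContinuousOn p (Set.Icc 0 T))
    (hf_cont : ContinuousOn (fun q : ℝ × ℝ => f q.1 q.2)
      (Set.Icc 0 l ×ˢ Set.Icc 0 T))
    (hω' : ∀ x ∈ Set.Icc (0:ℝ) l, HasDerivAt ω (ω' x) x)
    (hω'' : ∀ x ∈ Set.Icc (0:ℝ) l, HasDerivAt ω' (ω'' x) x)
    (hω''_cont : ContinuousOn ω'' (Set.Icc 0 l))
    (hu_cont : ContinuousOn (fun q : ℝ × ℝ => u q.1 q.2)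
      (Set.Icc 0 l ×ˢ Set.Icc 0 T))
    (hut_cont : ContinuousOn (fun q : ℝ × ℝ => ut q.1 q.2)
      (Set.Icc 0 l ×ˢ Set.Icc 0 T))
    (hut : ∀ x ∈ Set.Icc (0:ℝ) l, ∀ s ∈ Set.Icc (0:ℝ) T,
      HasDerivAt (fun τ => u x τ) (ut x s) s)
    (hux : ∀ t ∈ Set.Icc (0:ℝ) T, ∀ x ∈ Set.Icc (0:ℝ) l,
      HasDerivAt (fun y => u y t) (ux x t) x)
    (huxx : ∀ t ∈ Set.Icc (0:ℝ) T, ∀ x ∈ Set.Icc (0:ℝ) l,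
      HasDerivAt (fun y => ux y t) (uxx x t) x)
    (huxx_cont : ∀ t ∈ Set.Icc (0:ℝ) T,
      ContinuousOn (fun x => uxx x t) (Set.Icc 0 l))
    (hPDE : ∀ x ∈ Set.Ioo (0:ℝ) l, ∀ t ∈ Set.Ioc (0:ℝ) T,
      (1 / Real.Gamma (1 - α)) * (∫ s in (0:ℝ)..t, (t - s) ^ (-α) * ut x s)
        - uxx x t + p t * u x t = f x t)
    (hBC : ∀ t ∈ Set.Icc (0:ℝ) T, u 0 t = 0 ∧ u l t = 0)
    (hover : ∀ t ∈ Set.Icc (0:ℝ) T, (∫ x in (0:ℝ)..l, u x t * ω x) = g t)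
    (hg_ne : ∀ t ∈ Set.Icc (0:ℝ) T, g t ≠ 0) :
    ∀ t ∈ Set.Ioc (0:ℝ) T,
      p t = (ux l t * ω l - ux 0 t * ω 0
          + (∫ x in (0:ℝ)..l, u x t * ω'' x)
          + (∫ x in (0:ℝ)..l, f x t * ω x)
          - (1 / Real.Gamma (1 - α)) *
              ∫ s in (0:ℝ)..t, (t - s) ^ (-α) * deriv g s) / g t :=
  coefficient_recovery_formula_general α l T hα1 hl p f ω ω' ω'' g u ut ux uxx hf_cont hω' hω''
    hω''_cont hu_cont hut_cont hut hux huxx huxx_cont hPDE hBC hover hg_ne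
end
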